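/- arXiv:cs/9907032 — 2 statements merged into one kernel-verified Lean document; each statement's English description precedes it below -/
import Mathlib

section
/- Loop resolvents hold in normal models: let S be a finite set of SNF clauses, M a normal model of Aug(S), C ⇒ ◇l a sometime clause of S, and A_0 ⇒ ◯B_0, …, A_n ⇒ ◯B_n formulae with each A_i, B_i a conjunction of literals such that (M,0) ⊨ □(A_i ⇒ ◯B_i) for every i and, for every i, the propositional formulae B_i ⇒ ¬l and B_i ⇒ (A_0 ∨ … ∨ A_n) are valid. Then for every i, M satisfies □(start ⇒ (¬C ∨ l ∨ ¬A_i)), □(true ⇒ ◯(¬C ∨ l ∨ ¬A_i)) and □(w_l ⇒ ◯(l ∨ ¬A_i)) at index 0; consequently the clause set obtained from Aug(S) by a temporal resolution step is satisfiable (indeed has M as a normal model) whenever Aug(S) is. -/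
/-- A literal over proposition symbols `P`: a proposition symbol (`pos = true`)
or a negated proposition symbol (`pos = false`). -/
structure Lit (P : Type) where
  pos : Bool
  sym : P

/-- The complement of a literal. -/
def Lit.negate {P : Type} (l : Lit P) : Lit P := ⟨!l.pos, l.sym⟩

/-- A literal holds in model `σ` at index `i`. -/
def Lit.holds {P : Type} (σ : ℕ → Set P) (i : ℕ) (l : Lit P) : Prop :=
  if l.pos then l.sym ∈ σ i else l.sym ∉ σ i

/-- A conjunction of literals holds (the empty conjunction is the constant `true`). -/
def conjHolds {P : Type} (σ : ℕ → Set P) (i : ℕ) (L : List (Lit P)) : Prop :=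
  ∀ l ∈ L, Lit.holds σ i l

/-- A disjunction of literals holds. -/
def disjHolds {P : Type} (σ : ℕ → Set P) (i : ℕ) (L : List (Lit P)) : Prop :=
  ∃ l ∈ L, Lit.holds σ i l

/-- SNF clauses: initial clauses `start ⇒ ⋁ rhs`, step clauses `⋀ lhs ⇒ ◯⋁ rhs`
(an empty `lhs` is the constant `true`), and sometime clauses `⋀ lhs ⇒ ◇ev`. -/
inductive SNF (P : Type) : Type
  | initial (rhs : List (Lit P))
  | step (lhs rhs : List (Lit P))
  | sometime (lhs : List (Lit P)) (ev : Lit P)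

/-- Satisfaction of an SNF clause in model `σ` at index `i`. -/
def SNF.holds {P : Type} (σ : ℕ → Set P) (i : ℕ) : SNF P → Prop
  | .initial rhs => i = 0 → disjHolds σ i rhs
  | .step lhs rhs => conjHolds σ i lhs → disjHolds σ (i + 1) rhs
  | .sometime lhs ev => conjHolds σ i lhs → ∃ k, i ≤ k ∧ Lit.holds σ k ev

/-- `σ` is a model of the clause set `S`, i.e. `(σ,0) ⊨ □⋀_{A ∈ S} A`. -/
def IsModel {P : Type} (σ : ℕ → Set P) (S : Set (SNF P)) : Prop :=
  ∀ (i : ℕ), ∀ c ∈ S, SNF.holds σ i c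

/-- The proposition symbols occurring in an SNF clause. -/
def SNF.syms {P : Type} : SNF P → Set P
  | .initial rhs => {p | ∃ l ∈ rhs, Lit.sym l = p}
  | .step lhs rhs => {p | ∃ l ∈ lhs ++ rhs, Lit.sym l = p}
  | .sometime lhs ev => {p | ∃ l ∈ ev :: lhs, Lit.sym l = p}

/-- The proposition symbols occurring in a clause set. -/
def symsOf {P : Type} (S : Set (SNF P)) : Set P := ⋃ c ∈ S, c.syms

/-- The literals occurring as eventualities (◇l on the right-hand side of
sometime clauses) in `S`. -/
def evLits {P : Type} (S : Set (SNF P)) : Set (Lit P) :=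
  {l | ∃ lhs, SNF.sometime lhs l ∈ S}

/-- The positive literal on symbol `p`. -/
def posLit {P : Type} (p : P) : Lit P := ⟨true, p⟩

/-- The augmented clause set `Aug(S)`, where `w l` is the fresh symbol `w_l`
for each eventuality literal `l` of `S`: adds `w_l ⇒ ◯(l ∨ w_l)` and, for each
sometime clause `C ⇒ ◇l` of `S`, `start ⇒ (¬C ∨ l ∨ w_l)` and `true ⇒ ◯(¬C ∨ l ∨ w_l)`. -/
def Aug {P : Type} (S : Set (SNF P)) (w : Lit P → P) : Set (SNF P) :=
  S ∪ {c | ∃ l ∈ evLits S, c = SNF.step [posLit (w l)] [l, posLit (w l)]}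
    ∪ {c | ∃ lhs l, SNF.sometime lhs l ∈ S ∧
          c = SNF.initial (lhs.map Lit.negate ++ [l, posLit (w l)])}
    ∪ {c | ∃ lhs l, SNF.sometime lhs l ∈ S ∧
          c = SNF.step [] (lhs.map Lit.negate ++ [l, posLit (w l)])}

/-- The symbols `w_l` are fresh: none occurs in `S`, and distinct eventuality
literals receive distinct fresh symbols. -/
def FreshW {P : Type} (S : Set (SNF P)) (w : Lit P → P) : Prop :=
  (∀ l ∈ evLits S, ∀ c ∈ S, w l ∉ SNF.syms c) ∧ Set.InjOn w (evLits S)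

/-- A normal model of `Aug(S)`: a model of `Aug(S)` which moreover satisfies
`□(w_l ⇔ (¬l ∧ ◇l))` for each eventuality literal `l` of `S`. -/
def NormalModel {P : Type} (σ : ℕ → Set P) (S : Set (SNF P)) (w : Lit P → P) : Prop :=
  IsModel σ (Aug S w) ∧
  ∀ (i : ℕ), ∀ l ∈ evLits S,
    (w l ∈ σ i ↔ (¬ Lit.holds σ i l ∧ ∃ k, i ≤ k ∧ Lit.holds σ k l))

/-- The loop resolvents for the sometime clause `C ⇒ ◇l` and the loop formula
`⋁ᵢ Aᵢ`: for each `i`, `start ⇒ (¬C ∨ l ∨ ¬Aᵢ)`, `true ⇒ ◯(¬C ∨ l ∨ ¬Aᵢ)` and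
`w_l ⇒ ◯(l ∨ ¬Aᵢ)`. -/
def loopResolvents {P : Type} (w : Lit P → P) (C : List (Lit P)) (l : Lit P)
    (n : ℕ) (A : Fin (n + 1) → List (Lit P)) : Set (SNF P) :=
  {c | ∃ i : Fin (n + 1),
    c = SNF.initial (C.map Lit.negate ++ l :: (A i).map Lit.negate) ∨
    c = SNF.step [] (C.map Lit.negate ++ l :: (A i).map Lit.negate) ∨
    c = SNF.step [posLit (w l)] (l :: (A i).map Lit.negate)}

/-!
The conjunctions `A i` form a loop in `¬l`: once some `A i` holds, every later index satisfies
some `B j` and hence some `A j` again, and `¬l` there. So the only index at or after one where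
an `A i` holds at which `l` can still hold is that index itself. A sometime clause `C ⇒ ◇l`
therefore forces `l` wherever `C ∧ A i` holds, and in a normal model `w_l` (which promises `l`
later but not now) rules out `A i` at the next index unless `l` holds there.
-/

theorem Lit.holds_negate {P : Type} (σ : ℕ → Set P) (i : ℕ) (l : Lit P) :
    Lit.holds σ i l.negate ↔ ¬ Lit.holds σ i l := by
  obtain ⟨_ | _, _⟩ := l <;> simp [Lit.holds, Lit.negate]

section DisjHolds

variable {P : Type} (σ : ℕ → Set P) (i : ℕ)

@[simp]
theorem disjHolds_cons (x : Lit P) (L : List (Lit P)) :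
    disjHolds σ i (x :: L) ↔ Lit.holds σ i x ∨ disjHolds σ i L := by
  simp [disjHolds]

@[simp]
theorem disjHolds_append (L₁ L₂ : List (Lit P)) :
    disjHolds σ i (L₁ ++ L₂) ↔ disjHolds σ i L₁ ∨ disjHolds σ i L₂ := by
  simp [disjHolds, or_and_right, exists_or]

@[simp]
theorem disjHolds_map_negate (L : List (Lit P)) :
    disjHolds σ i (L.map Lit.negate) ↔ ¬ conjHolds σ i L := by
  simp [disjHolds, conjHolds, Lit.holds_negate]

end DisjHolds

structure IsLoop {P ι : Type} (σ : ℕ → Set P) (l : Lit P) (A B : ι → List (Lit P)) : Prop where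
  step : ∀ i j, conjHolds σ j (A i) → conjHolds σ (j + 1) (B i)
  not_holds : ∀ i k, conjHolds σ k (B i) → ¬ Lit.holds σ k l
  covers : ∀ i k, conjHolds σ k (B i) → ∃ j, conjHolds σ k (A j)

namespace IsLoop

variable {P ι : Type} {σ : ℕ → Set P} {l : Lit P} {A B : ι → List (Lit P)}

theorem exists_conjHolds_of_le (hL : IsLoop σ l A B) {i : ι} {j k : ℕ}
    (hA : conjHolds σ j (A i)) (hjk : j ≤ k) : ∃ i', conjHolds σ k (A i') := by
  induction k, hjk using Nat.le_induction with
  | base => exact ⟨i, hA⟩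
  | succ k _ ih =>
    obtain ⟨i', hA'⟩ := ih
    exact hL.covers i' (k + 1) (hL.step i' k hA')

theorem not_holds_of_lt (hL : IsLoop σ l A B) {i : ι} {j k : ℕ}
    (hA : conjHolds σ j (A i)) (hjk : j < k) : ¬ Lit.holds σ k l := by
  obtain ⟨k, rfl⟩ : ∃ k', k = k' + 1 := ⟨k - 1, by omega⟩
  obtain ⟨i', hA'⟩ := hL.exists_conjHolds_of_le hA (Nat.le_of_lt_succ hjk)
  exact hL.not_holds i' (k + 1) (hL.step i' k hA')

theorem holds_of_eventually (hL : IsLoop σ l A B) {i : ι} {m : ℕ}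
    (hA : conjHolds σ m (A i)) (hev : ∃ k, m ≤ k ∧ Lit.holds σ k l) : Lit.holds σ m l := by
  obtain ⟨k, hmk, hl⟩ := hev
  obtain rfl | hlt := hmk.eq_or_lt
  · exact hl
  · exact absurd hl (hL.not_holds_of_lt hA hlt)

theorem disjHolds_resolvent (hL : IsLoop σ l A B) {C : List (Lit P)} {m : ℕ}
    (hCl : SNF.holds σ m (SNF.sometime C l)) (i : ι) :
    disjHolds σ m (C.map Lit.negate ++ l :: (A i).map Lit.negate) := by
  simp only [disjHolds_append, disjHolds_cons, disjHolds_map_negate]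
  by_cases hC : conjHolds σ m C
  · by_cases hA : conjHolds σ m (A i)
    · exact Or.inr (Or.inl (hL.holds_of_eventually hA (hCl hC)))
    · exact Or.inr (Or.inr hA)
  · exact Or.inl hC

theorem disjHolds_wResolvent (hL : IsLoop σ l A B) {p : P} {m : ℕ}
    (hp : p ∈ σ m → ¬ Lit.holds σ m l ∧ ∃ k, m ≤ k ∧ Lit.holds σ k l) (hpm : p ∈ σ m) (i : ι) :
    disjHolds σ (m + 1) (l :: (A i).map Lit.negate) := by
  simp only [disjHolds_cons, disjHolds_map_negate]
  refine or_iff_not_imp_right.2 fun hA => hL.holds_of_eventually (not_not.1 hA) ?_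
  obtain ⟨hnl, k, hmk, hl⟩ := hp hpm
  obtain rfl | hlt := hmk.eq_or_lt
  · exact absurd hl hnl
  · exact ⟨k, hlt, hl⟩

end IsLoop

theorem mem_Aug_of_mem {P : Type} {S : Set (SNF P)} (w : Lit P → P) {c : SNF P} (hc : c ∈ S) :
    c ∈ Aug S w :=
  Or.inl (Or.inl (Or.inl hc))

theorem stmt_9_general {P : Type} (S : Set (SNF P))
    (w : Lit P → P) (M : ℕ → Set P) (hM : NormalModel M S w)
    (C : List (Lit P)) (l : Lit P) (hCl : SNF.sometime C l ∈ S)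
    (n : ℕ) (A B : Fin (n + 1) → List (Lit P))
    (hAB : ∀ (i : Fin (n + 1)) (j : ℕ), conjHolds M j (A i) → conjHolds M (j + 1) (B i))
    (h1 : ∀ (i : Fin (n + 1)) (σ : ℕ → Set P) (k : ℕ),
      conjHolds σ k (B i) → Lit.holds σ k l.negate)
    (h2 : ∀ (i : Fin (n + 1)) (σ : ℕ → Set P) (k : ℕ),
      conjHolds σ k (B i) → ∃ j : Fin (n + 1), conjHolds σ k (A j)) :
    (∀ i : Fin (n + 1),
      (∀ m : ℕ, SNF.holds M m (SNF.initial (C.map Lit.negate ++ l :: (A i).map Lit.negate))) ∧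
      (∀ m : ℕ, SNF.holds M m (SNF.step [] (C.map Lit.negate ++ l :: (A i).map Lit.negate))) ∧
      (∀ m : ℕ, SNF.holds M m (SNF.step [posLit (w l)] (l :: (A i).map Lit.negate)))) ∧
    IsModel M (Aug S w ∪ loopResolvents w C l n A) := by
  obtain ⟨hAug, hnormal⟩ := hM
  have hL : IsLoop M l A B :=
    ⟨hAB, fun i k hB => (Lit.holds_negate M k l).1 (h1 i M k hB), fun i k => h2 i M k⟩
  have hev (m : ℕ) : SNF.holds M m (SNF.sometime C l) := hAug m _ (mem_Aug_of_mem w hCl)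
  have resolvents (i : Fin (n + 1)) :
      (∀ m : ℕ, SNF.holds M m (SNF.initial (C.map Lit.negate ++ l :: (A i).map Lit.negate))) ∧
      (∀ m : ℕ, SNF.holds M m (SNF.step [] (C.map Lit.negate ++ l :: (A i).map Lit.negate))) ∧
      (∀ m : ℕ, SNF.holds M m (SNF.step [posLit (w l)] (l :: (A i).map Lit.negate))) :=
    ⟨fun m _ => hL.disjHolds_resolvent (hev m) i,
      fun m _ => hL.disjHolds_resolvent (hev (m + 1)) i,
      fun m hw => hL.disjHolds_wResolvent (hnormal m l ⟨C, hCl⟩).1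
        (hw _ (List.mem_singleton_self _)) i⟩
  refine ⟨resolvents, ?_⟩
  rintro m c (hc | ⟨i, rfl | rfl | rfl⟩)
  · exact hAug m c hc
  · exact (resolvents i).1 m
  · exact (resolvents i).2.1 m
  · exact (resolvents i).2.2 m

/-- loop resolvents hold in normal models: if `M` is a normal model of
`Aug(S)`, `C ⇒ ◇l` is a sometime clause of `S`, and `A₀ ⇒ ◯B₀, …, Aₙ ⇒ ◯Bₙ` are
merged clauses holding throughout `M` whose right-hand sides propositionally imply
`¬l` and `A₀ ∨ … ∨ Aₙ`, then all loop resolvents hold throughout `M`; consequently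
the clause set obtained from `Aug(S)` by this temporal resolution step has `M` as a
model (hence is satisfiable whenever `Aug(S)` is). -/
theorem stmt_9 {P : Type} [Countable P] (S : Set (SNF P)) (hfin : S.Finite)
    (w : Lit P → P) (hw : FreshW S w) (M : ℕ → Set P) (hM : NormalModel M S w)
    (C : List (Lit P)) (l : Lit P) (hCl : SNF.sometime C l ∈ S)
    (n : ℕ) (A B : Fin (n + 1) → List (Lit P))
    (hAB : ∀ (i : Fin (n + 1)) (j : ℕ), conjHolds M j (A i) → conjHolds M (j + 1) (B i))
    (h1 : ∀ (i : Fin (n + 1)) (σ : ℕ → Set P) (k : ℕ),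
      conjHolds σ k (B i) → Lit.holds σ k l.negate)
    (h2 : ∀ (i : Fin (n + 1)) (σ : ℕ → Set P) (k : ℕ),
      conjHolds σ k (B i) → ∃ j : Fin (n + 1), conjHolds σ k (A j)) :
    (∀ i : Fin (n + 1),
      (∀ m : ℕ, SNF.holds M m (SNF.initial (C.map Lit.negate ++ l :: (A i).map Lit.negate))) ∧
      (∀ m : ℕ, SNF.holds M m (SNF.step [] (C.map Lit.negate ++ l :: (A i).map Lit.negate))) ∧
      (∀ m : ℕ, SNF.holds M m (SNF.step [posLit (w l)] (l :: (A i).map Lit.negate)))) ∧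
    IsModel M (Aug S w ∪ loopResolvents w C l n A) :=
  stmt_9_general S w M hM C l hCl n A B hAB h1 h2
end

section
/- Removal of the □ operator preserves satisfiability (one step of the SNF translation): let R_1, …, R_m be PLTL formulae, x a proposition symbol, A a PLTL formula, and σ a model with (σ,0) ⊨ (⋀_{h=1}^{m} □R_h) ∧ □(x ⇒ □A). Let y be a proposition symbol occurring in none of the R_h, in x, or in A. Then there is a model σ′ that agrees with σ on all proposition symbols other than y and satisfies (σ′,0) ⊨ (⋀_{h=1}^{m} □R_h) ∧ □(x ⇒ A) ∧ □(x ⇒ y) ∧ □(y ⇒ ◯A) ∧ □(y ⇒ ◯y). -/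
/-- Syntax of Propositional Linear Temporal Logic over proposition symbols `P`. -/
inductive PLTL (P : Type) : Type
  | tru : PLTL P
  | fls : PLTL P
  | start : PLTL P
  | atom : P → PLTL P
  | neg : PLTL P → PLTL P
  | conj : PLTL P → PLTL P → PLTL P
  | disj : PLTL P → PLTL P → PLTL P
  | impl : PLTL P → PLTL P → PLTL P
  | next : PLTL P → PLTL P
  | evtl : PLTL P → PLTL P
  | alw : PLTL P → PLTL P
  | untl : PLTL P → PLTL P → PLTL P
  | unls : PLTL P → PLTL P → PLTL P

namespace PLTL

/-- Satisfaction `(σ, i) ⊨ A` of a PLTL formula in a model `σ : ℕ → Set P` at index `i`. -/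
def Sat {P : Type} (σ : ℕ → Set P) : PLTL P → ℕ → Prop
  | tru, _ => True
  | fls, _ => False
  | start, i => i = 0
  | atom p, i => p ∈ σ i
  | neg A, i => ¬ Sat σ A i
  | conj A B, i => Sat σ A i ∧ Sat σ B i
  | disj A B, i => Sat σ A i ∨ Sat σ B i
  | impl A B, i => Sat σ A i → Sat σ B i
  | next A, i => Sat σ A (i + 1)
  | evtl A, i => ∃ k, i ≤ k ∧ Sat σ A k
  | alw A, i => ∀ j, i ≤ j → Sat σ A j
  | untl A B, i => ∃ k, i ≤ k ∧ Sat σ B k ∧ ∀ j, i ≤ j → j < k → Sat σ A j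
  | unls A B, i =>
      (∃ k, i ≤ k ∧ Sat σ B k ∧ ∀ j, i ≤ j → j < k → Sat σ A j) ∨ (∀ j, i ≤ j → Sat σ A j)

/-- A formula is valid iff it is satisfied at index 0 of every model. -/
def Valid {P : Type} (A : PLTL P) : Prop := ∀ σ : ℕ → Set P, Sat σ A 0

/-- A formula with no temporal connectives is propositionally valid iff
it is satisfied at every index of every model. -/
def PropValid {P : Type} (A : PLTL P) : Prop := ∀ (σ : ℕ → Set P) (i : ℕ), Sat σ A i

/-- A literal is a proposition symbol or a negated proposition symbol. -/
def IsLiteral {P : Type} : PLTL P → Prop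
  | atom _ => True
  | neg (atom _) => True
  | _ => False

/-- A conjunction of literals. -/
def IsConjLits {P : Type} : PLTL P → Prop
  | atom _ => True
  | neg (atom _) => True
  | conj A B => IsConjLits A ∧ IsConjLits B
  | _ => False

/-- Biconditional `A ⇔ B` as an abbreviation. -/
def piff {P : Type} (A B : PLTL P) : PLTL P := conj (impl A B) (impl B A)

/-- Finite disjunction. -/
def bigOr {P : Type} (l : List (PLTL P)) : PLTL P := l.foldr disj fls

/-- Finite conjunction. -/
def bigAnd {P : Type} (l : List (PLTL P)) : PLTL P := l.foldr conj tru

/-- The proposition symbols occurring in a formula. -/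
def syms {P : Type} : PLTL P → Set P
  | tru => ∅
  | fls => ∅
  | start => ∅
  | atom p => {p}
  | neg A => syms A
  | conj A B => syms A ∪ syms B
  | disj A B => syms A ∪ syms B
  | impl A B => syms A ∪ syms B
  | next A => syms A
  | evtl A => syms A
  | alw A => syms A
  | untl A B => syms A ∪ syms B
  | unls A B => syms A ∪ syms B

end PLTL


namespace PLTL

variable {P : Type}

theorem sat_congr {σ σ' : ℕ → Set P} {B : PLTL P}
    (h : ∀ i, ∀ p ∈ syms B, (p ∈ σ i ↔ p ∈ σ' i)) (i : ℕ) : Sat σ B i ↔ Sat σ' B i := by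
  induction B generalizing i <;> simp_all [Sat, syms]

def updateAtom (σ : ℕ → Set P) (y : P) (v : ℕ → Prop) : ℕ → Set P :=
  fun i => {p | p = y ∧ v i ∨ p ≠ y ∧ p ∈ σ i}

section updateAtom

variable {σ : ℕ → Set P} {y : P} {v : ℕ → Prop}

@[simp]
theorem mem_updateAtom_self {i : ℕ} : y ∈ updateAtom σ y v i ↔ v i := by
  simp [updateAtom]

theorem mem_updateAtom_of_ne {i : ℕ} {p : P} (hp : p ≠ y) :
    p ∈ updateAtom σ y v i ↔ p ∈ σ i := by
  simp [updateAtom, hp]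

theorem sat_updateAtom_of_notMem {B : PLTL P} (hy : y ∉ syms B) (i : ℕ) :
    Sat (updateAtom σ y v) B i ↔ Sat σ B i :=
  sat_congr (fun _ _ hp => mem_updateAtom_of_ne (ne_of_mem_of_not_mem hp hy)) i

end updateAtom

theorem sat_alw_zero {σ : ℕ → Set P} {B : PLTL P} : Sat σ (alw B) 0 ↔ ∀ i, Sat σ B i := by
  simp [Sat]

end PLTL

open PLTL in
theorem stmt_18_general {P : Type} (m : ℕ) (R : Fin m → PLTL P) (x : P)
    (A : PLTL P) (σ : ℕ → Set P) (y : P)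
    (hyR : ∀ h : Fin m, y ∉ syms (R h)) (hyx : y ≠ x) (hyA : y ∉ syms A)
    (hσ : (∀ h : Fin m, Sat σ (alw (R h)) 0) ∧
          Sat σ (alw (impl (atom x) (alw A))) 0) :
    ∃ σ' : ℕ → Set P,
      (∀ (i : ℕ) (p : P), p ≠ y → (p ∈ σ' i ↔ p ∈ σ i)) ∧
      (∀ h : Fin m, Sat σ' (alw (R h)) 0) ∧
      Sat σ' (alw (impl (atom x) A)) 0 ∧
      Sat σ' (alw (impl (atom x) (atom y))) 0 ∧
      Sat σ' (alw (impl (atom y) (next A))) 0 ∧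
      Sat σ' (alw (impl (atom y) (next (atom y)))) 0 := by
  -- `y` is made true from the first occurrence of `x` on; `□(x ⇒ □A)` then gives `A` there.
  obtain ⟨hR, hxA⟩ := hσ
  simp only [sat_alw_zero] at hR hxA ⊢
  refine ⟨updateAtom σ y fun i => ∃ j ≤ i, x ∈ σ j, fun i p => mem_updateAtom_of_ne, ?_⟩
  simp only [Sat, mem_updateAtom_self, mem_updateAtom_of_ne hyx.symm, sat_updateAtom_of_notMem hyA,
    sat_updateAtom_of_notMem (hyR _)]
  refine ⟨hR, fun i hx => hxA i hx i le_rfl, fun i hx => ⟨i, le_rfl, hx⟩, ?_, ?_⟩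
  · rintro i ⟨j, hji, hx⟩
    exact hxA j hx (i + 1) (by omega)
  · rintro i ⟨j, hji, hx⟩
    exact ⟨j, by omega, hx⟩

open PLTL in
/-- removal of the □ operator preserves satisfiability
(one step of the SNF translation). -/
theorem stmt_18 {P : Type} [Countable P] (m : ℕ) (R : Fin m → PLTL P) (x : P)
    (A : PLTL P) (σ : ℕ → Set P) (y : P)
    (hyR : ∀ h : Fin m, y ∉ syms (R h)) (hyx : y ≠ x) (hyA : y ∉ syms A)
    (hσ : (∀ h : Fin m, Sat σ (alw (R h)) 0) ∧
          Sat σ (alw (impl (atom x) (alw A))) 0) :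
    ∃ σ' : ℕ → Set P,
      (∀ (i : ℕ) (p : P), p ≠ y → (p ∈ σ' i ↔ p ∈ σ i)) ∧
      (∀ h : Fin m, Sat σ' (alw (R h)) 0) ∧
      Sat σ' (alw (impl (atom x) A)) 0 ∧
      Sat σ' (alw (impl (atom x) (atom y))) 0 ∧
      Sat σ' (alw (impl (atom y) (next A))) 0 ∧
      Sat σ' (alw (impl (atom y) (next (atom y)))) 0 :=
  stmt_18_general m R x A σ y hyR hyx hyA hσ
end
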